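/- Let C be a C*-algebra, A ⊆ C a closed *-subalgebra, X ⊆ C a closed subspace with AX ⊆ X, XA ⊆ X, X*X ⊆ A, XX* ⊆ A, and suppose X is right full, i.e., X*·X = A (closed span). Then X^{-k}·X^{l} = X^{l-k} for all integers k, l ≥ 0, where X^m denotes the m-fold closed-span power (X^0 = A, negative powers via the adjoint). -/

import Mathlib

variable {C : Type*} [NonUnitalCStarAlgebra C]

/-- `mulSpan X Y` is the closed linear span of the elementwise products `{x * y}`. -/
def mulSpan (X Y : Set C) : Set C :=
  closure (Submodule.span ℂ {z : C | ∃ x ∈ X, ∃ y ∈ Y, z = x * y} : Set C)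

/-- `addCl X Y` is the closure of the set of elementwise sums. -/
def addCl (X Y : Set C) : Set C :=
  closure {z : C | ∃ x ∈ X, ∃ y ∈ Y, z = x + y}

/-- `sumCl X` is the closure of the set of finite sums from the family `X`. -/
def sumCl {ι : Type*} (X : ι → Set C) : Set C :=
  closure {z : C | ∃ (s : Finset ι) (f : ι → C), (∀ i ∈ s, f i ∈ X i) ∧ z = ∑ i ∈ s, f i}

/-- `npowSet X n` is the `(n+1)`-fold closed-span product `X · X ⋯ X`. -/
def npowSet (X : Set C) : ℕ → Set C
  | 0 => X
  | n + 1 => mulSpan (npowSet X n) X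

/-- Integer powers: `X^k` for `k ≥ 1`, `X^0 = A`, `X^k = (X*)^(-k)` for `k ≤ -1`. -/
def zpowSet (A X : Set C) (k : ℤ) : Set C :=
  if k = 0 then A
  else if 0 < k then npowSet X (k.toNat - 1)
  else npowSet ((star ·) '' X) ((-k).toNat - 1)

/-!
A closed ⋆-subalgebra `A` acts nondegenerately on every closed subspace `V` it multiplies
into, as soon as `v * v⋆` (resp. `v⋆ * v`) lies in `A`: continuous functional calculus
turns `c = b⋆ b ∈ A` into `u = f(c) ∈ A` with `b u → b`. Hence `A · X = X`, `X⋆ · A = X⋆`.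
Together with `X⋆ · X = A` and the associativity of closed-span products, left multiplication
by `X⋆` lowers every integer power by one, `X⋆ · X^j = X^(j-1)`, and the theorem follows by
induction on `k`.
-/

open Submodule

lemma mul_mem_mulSpan {X Y : Set C} {x y : C} (hx : x ∈ X) (hy : y ∈ Y) :
    x * y ∈ mulSpan X Y :=
  subset_closure (subset_span ⟨x, hx, y, hy, rfl⟩)

lemma closure_span_subset {S : Set C} {M : Submodule ℂ C} (hM : IsClosed (M : Set C))
    (hS : S ⊆ M) : closure (span ℂ S : Set C) ⊆ M :=
  closure_minimal (span_le.2 hS) hM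

lemma mulSpan_subset {X Y : Set C} {M : Submodule ℂ C} (hM : IsClosed (M : Set C))
    (h : ∀ x ∈ X, ∀ y ∈ Y, x * y ∈ M) : mulSpan X Y ⊆ M :=
  closure_span_subset hM (by rintro _ ⟨x, hx, y, hy, rfl⟩; exact h x hx y hy)

lemma mul_mem_of_mem_closure_span {S T : Set C} {M : Submodule ℂ C} (hM : IsClosed (M : Set C))
    (h : ∀ s ∈ S, ∀ t ∈ T, s * t ∈ M) {s t : C} (hs : s ∈ closure (span ℂ S : Set C))
    (ht : t ∈ closure (span ℂ T : Set C)) : s * t ∈ M := by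
  have hsT : ∀ t ∈ T, s * t ∈ M := fun t ht =>
    closure_span_subset (M := M.comap (LinearMap.mulRight ℂ t))
      (hM.preimage (continuous_mul_const t)) (fun s hs => h s hs t ht) hs
  exact closure_span_subset (M := M.comap (LinearMap.mulLeft ℂ s))
    (hM.preimage (continuous_const_mul s)) hsT ht

def mulSpanSubmodule (X Y : Set C) : Submodule ℂ C :=
  (span ℂ {z : C | ∃ x ∈ X, ∃ y ∈ Y, z = x * y}).topologicalClosure

lemma isClosed_mulSpanSubmodule (X Y : Set C) : IsClosed (mulSpanSubmodule X Y : Set C) :=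
  isClosed_closure

lemma mulSpan_assoc (X Y Z : Set C) : mulSpan (mulSpan X Y) Z = mulSpan X (mulSpan Y Z) := by
  apply subset_antisymm
  · refine mulSpan_subset (isClosed_mulSpanSubmodule X (mulSpan Y Z)) fun a ha z hz => ?_
    refine mul_mem_of_mem_closure_span (isClosed_mulSpanSubmodule _ _) ?_ ha
      (subset_closure (subset_span hz))
    rintro _ ⟨x, hx, y, hy, rfl⟩ z hz
    rw [mul_assoc]
    exact mul_mem_mulSpan hx (mul_mem_mulSpan hy hz)
  · refine mulSpan_subset (isClosed_mulSpanSubmodule (mulSpan X Y) Z) fun x hx a ha => ?_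
    refine mul_mem_of_mem_closure_span (isClosed_mulSpanSubmodule _ _) ?_
      (subset_closure (subset_span hx)) ha
    rintro x hx _ ⟨y, hy, z, hz, rfl⟩
    rw [← mul_assoc]
    exact mul_mem_mulSpan (mul_mem_mulSpan hx hy) hz

lemma mem_mulSpan_of_forall_norm_sub_mul_lt {X Y : Set C} {z : C}
    (h : ∀ ε > 0, ∃ x ∈ X, ∃ y ∈ Y, ‖z - x * y‖ < ε) : z ∈ mulSpan X Y :=
  Metric.mem_closure_iff.2 fun ε hε =>
    let ⟨x, hx, y, hy, hxy⟩ := h ε hε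
    ⟨x * y, subset_span ⟨x, hx, y, hy, rfl⟩, by rwa [dist_eq_norm]⟩

lemma abs_mul_div_add_sq_sq_le {d : ℝ} (hd : 0 < d) (t : ℝ) :
    |t * (d ^ 2 / (d ^ 2 + t ^ 2)) ^ 2| ≤ d / 2 := by
  have hden : 0 < d ^ 2 + t ^ 2 := by positivity
  rw [abs_mul, abs_of_nonneg (sq_nonneg (d ^ 2 / (d ^ 2 + t ^ 2))), div_pow, mul_div_assoc',
    div_le_div_iff₀ (by positivity) two_pos]
  rw [← sq_abs t] at hden ⊢
  nlinarith [mul_nonneg hd.le (mul_nonneg (sq_nonneg |t|) hden.le),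
    mul_nonneg hd.le (mul_nonneg (sq_nonneg d) (sq_nonneg (d - |t|)))]

theorem exists_mem_norm_sub_mul_lt (A : NonUnitalStarSubalgebra ℂ C) (hA : IsClosed (A : Set C))
    {b : C} (hb : star b * b ∈ A) {ε : ℝ} (hε : 0 < ε) :
    ∃ a ∈ A, ‖b - b * a‖ < ε := by
  set c := star b * b
  set d := ε ^ 2
  have hd : 0 < d := by positivity
  have hden : ∀ t : ℝ, d ^ 2 + t ^ 2 ≠ 0 := fun t => by positivity
  set f : ℝ → ℝ := fun t => t ^ 2 / (d ^ 2 + t ^ 2)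
  have hf : Continuous f := by fun_prop (disch := exact hden _)
  have hf0 : f 0 = 0 := by simp [f]
  set g : ℝ → ℝ := fun t => t - t * f t
  have hg0 : g 0 = 0 := by simp [g]
  refine ⟨cfcₙ f c, cfcₙ_mem (hs := hA) f hb, ?_⟩
  set u := cfcₙ f c
  have hu : IsSelfAdjoint u := cfcₙ_predicate f c
  have hcu : c - c * u = cfcₙ g c := by
    rw [cfcₙ_sub _ _ c (by fun_prop) (by simp) (by fun_prop) (by simp [hf0]), cfcₙ_mul _ _ c,
      cfcₙ_id' ℝ c]
  -- `(b - b u)⋆ (b - b u) = c (1 - u)²`, and `|t| (1 - f t)² ≤ d / 2` on the spectrum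
  have hstar : star (b - b * u) * (b - b * u) = cfcₙ (fun t => g t - f t * g t) c := by
    rw [cfcₙ_sub _ _ c (by fun_prop) hg0 (by fun_prop) (by simp [hg0]), cfcₙ_mul _ _ c, ← hcu]
    simp only [star_sub, star_mul, hu.star_eq, c]
    noncomm_ring
  have hnorm : ‖star (b - b * u) * (b - b * u)‖ ≤ d / 2 := by
    rw [hstar]
    refine norm_cfcₙ_le fun t _ => ?_
    have hgt : g t - f t * g t = t * (d ^ 2 / (d ^ 2 + t ^ 2)) ^ 2 := by
      have := hden t
      simp only [g, f]
      field_simp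
      ring
    rw [hgt, Real.norm_eq_abs]
    exact abs_mul_div_add_sq_sq_le hd t
  rw [CStarRing.norm_star_mul_self, ← sq] at hnorm
  exact (pow_lt_pow_iff_left₀ (norm_nonneg _) hε.le two_ne_zero).mp (by linarith)

theorem exists_mem_norm_sub_mul_lt' (A : NonUnitalStarSubalgebra ℂ C) (hA : IsClosed (A : Set C))
    {b : C} (hb : b * star b ∈ A) {ε : ℝ} (hε : 0 < ε) :
    ∃ a ∈ A, ‖b - a * b‖ < ε := by
  obtain ⟨a, ha, hlt⟩ := exists_mem_norm_sub_mul_lt A hA (b := star b) (by rwa [star_star]) hε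
  refine ⟨star a, star_mem ha, ?_⟩
  rwa [← norm_star, star_sub, star_mul, star_star]

theorem mulSpan_starSubalgebra_submodule (A : NonUnitalStarSubalgebra ℂ C)
    (hA : IsClosed (A : Set C)) (V : Submodule ℂ C) (hV : IsClosed (V : Set C))
    (hAV : ∀ a ∈ A, ∀ v ∈ V, a * v ∈ V) (hVV : ∀ v ∈ V, v * star v ∈ A) :
    mulSpan (A : Set C) (V : Set C) = V :=
  subset_antisymm (mulSpan_subset hV hAV) fun v hv =>
    mem_mulSpan_of_forall_norm_sub_mul_lt fun _ hε =>
      let ⟨a, ha, hlt⟩ := exists_mem_norm_sub_mul_lt' A hA (hVV v hv) hε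
      ⟨a, ha, v, hv, hlt⟩

theorem mulSpan_submodule_starSubalgebra (A : NonUnitalStarSubalgebra ℂ C)
    (hA : IsClosed (A : Set C)) (V : Submodule ℂ C) (hV : IsClosed (V : Set C))
    (hVA : ∀ v ∈ V, ∀ a ∈ A, v * a ∈ V) (hVV : ∀ v ∈ V, star v * v ∈ A) :
    mulSpan (V : Set C) (A : Set C) = V :=
  subset_antisymm (mulSpan_subset hV hVA) fun v hv =>
    mem_mulSpan_of_forall_norm_sub_mul_lt fun _ hε =>
      let ⟨a, ha, hlt⟩ := exists_mem_norm_sub_mul_lt A hA (hVV v hv) hε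
      ⟨v, hv, a, ha, hlt⟩

theorem mulSpan_starSubalgebra_self (A : NonUnitalStarSubalgebra ℂ C)
    (hA : IsClosed (A : Set C)) : mulSpan (A : Set C) (A : Set C) = A :=
  mulSpan_starSubalgebra_submodule A hA A.toNonUnitalSubalgebra.toSubmodule hA
    (fun _ ha _ hb => (mul_mem ha hb : _ ∈ A)) fun _ ha => mul_mem ha (star_mem ha)

theorem mulSpan_star_image_starSubalgebra (A : NonUnitalStarSubalgebra ℂ C)
    (hA : IsClosed (A : Set C)) (X : Submodule ℂ C) (hX : IsClosed (X : Set C))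
    (hAX : ∀ a ∈ A, ∀ x ∈ X, a * x ∈ X) (hXX : ∀ x ∈ X, x * star x ∈ A) :
    mulSpan ((star ·) '' (X : Set C)) (A : Set C) = (star ·) '' (X : Set C) := by
  let Xs : Submodule ℂ C := X.comap (starLinearEquiv ℂ (A := C)).toLinearMap
  have hXs : (Xs : Set C) = (star ·) '' (X : Set C) := by ext; simp [Xs]
  rw [← hXs]
  refine mulSpan_submodule_starSubalgebra A hA Xs (hX.preimage continuous_star) ?_ ?_
  · intro v hv a ha
    simpa [Xs] using hAX (star a) (star_mem ha) (star v) hv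
  · intro v hv
    simpa using hXX (star v) hv

lemma npowSet_succ' (X : Set C) (n : ℕ) : npowSet X (n + 1) = mulSpan X (npowSet X n) := by
  induction n with
  | zero => rfl
  | succ n ih =>
    calc npowSet X (n + 2) = mulSpan (mulSpan X (npowSet X n)) X := by rw [← ih]; rfl
      _ = mulSpan X (npowSet X (n + 1)) := mulSpan_assoc _ _ _

lemma mulSpan_npowSet {A X : Set C} (h : mulSpan A X = X) (n : ℕ) :
    mulSpan A (npowSet X n) = npowSet X n := by
  induction n with
  | zero => exact h
  | succ n ih => rw [npowSet, ← mulSpan_assoc, ih]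

section zpowSet

variable (A X : Set C)

lemma zpowSet_zero : zpowSet A X 0 = A := rfl

lemma zpowSet_natCast_add_one (n : ℕ) : zpowSet A X (n + 1) = npowSet X n := by
  rw [zpowSet, if_neg (by omega), if_pos (by omega)]
  congr 1

lemma zpowSet_negSucc (n : ℕ) : zpowSet A X (Int.negSucc n) = npowSet ((star ·) '' X) n := by
  rw [zpowSet, if_neg (by omega), if_neg (by omega)]
  congr 1

variable {A X}

lemma mulSpan_zpowSet_natCast (hAA : mulSpan A A = A) (hAX : mulSpan A X = X) (l : ℕ) :
    mulSpan A (zpowSet A X l) = zpowSet A X l := by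
  cases l with
  | zero => exact hAA
  | succ n =>
    rw [Nat.cast_succ, zpowSet_natCast_add_one]
    exact mulSpan_npowSet hAX n

lemma mulSpan_star_zpowSet (hfull : mulSpan ((star ·) '' X) X = A)
    (hXsA : mulSpan ((star ·) '' X) A = (star ·) '' X) (hAX : mulSpan A X = X) (j : ℤ) :
    mulSpan ((star ·) '' X) (zpowSet A X j) = zpowSet A X (j - 1) := by
  rcases j with (_ | _ | n) | n
  · exact hXsA
  · exact hfull
  · rw [show Int.ofNat (n + 2) = (n + 1 : ℕ) + 1 from rfl, zpowSet_natCast_add_one,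
      npowSet_succ', ← mulSpan_assoc, hfull, mulSpan_npowSet hAX, add_sub_cancel_right,
      Nat.cast_succ, zpowSet_natCast_add_one]
  · rw [zpowSet_negSucc, ← npowSet_succ', show Int.negSucc n - 1 = Int.negSucc (n + 1) by omega,
      zpowSet_negSucc]

end zpowSet

theorem zpowSet_mul_of_rightFull_general (A : NonUnitalStarSubalgebra ℂ C) (hA : IsClosed (A : Set C))
    (X : Submodule ℂ C) (hX : IsClosed (X : Set C))
    (hAX : ∀ a ∈ A, ∀ x ∈ X, a * x ∈ X)
    (hXXs : ∀ x ∈ X, ∀ y ∈ X, x * star y ∈ A)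
    (hfull : mulSpan ((star ·) '' (X : Set C)) (X : Set C) = (A : Set C)) (k l : ℕ) :
    mulSpan (zpowSet (A : Set C) (X : Set C) (-(k : ℤ)))
        (zpowSet (A : Set C) (X : Set C) (l : ℤ))
      = zpowSet (A : Set C) (X : Set C) ((l : ℤ) - (k : ℤ)) := by
  have hAX' := mulSpan_starSubalgebra_submodule A hA X hX hAX fun x hx => hXXs x hx x hx
  have hXsA := mulSpan_star_image_starSubalgebra A hA X hX hAX fun x hx => hXXs x hx x hx
  have hstep := mulSpan_star_zpowSet hfull hXsA hAX'
  induction k with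
  | zero =>
    simpa [zpowSet_zero] using mulSpan_zpowSet_natCast (mulSpan_starSubalgebra_self A hA) hAX' l
  | succ k ih =>
    rw [show -((k + 1 : ℕ) : ℤ) = -k - 1 by push_cast; ring, ← hstep, mulSpan_assoc, ih,
      hstep, show (l : ℤ) - k - 1 = l - (k + 1 : ℕ) by push_cast; ring]

/-- If `X` is right full then `X^(-k) · X^l = X^(l-k)` for all `k, l ≥ 0`. -/
theorem zpowSet_mul_of_rightFull (A : NonUnitalStarSubalgebra ℂ C) (hA : IsClosed (A : Set C))
    (X : Submodule ℂ C) (hX : IsClosed (X : Set C))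
    (hAX : ∀ a ∈ A, ∀ x ∈ X, a * x ∈ X) (hXA : ∀ x ∈ X, ∀ a ∈ A, x * a ∈ X)
    (hXsX : ∀ x ∈ X, ∀ y ∈ X, star x * y ∈ A) (hXXs : ∀ x ∈ X, ∀ y ∈ X, x * star y ∈ A)
    (hfull : mulSpan ((star ·) '' (X : Set C)) (X : Set C) = (A : Set C)) (k l : ℕ) :
    mulSpan (zpowSet (A : Set C) (X : Set C) (-(k : ℤ)))
        (zpowSet (A : Set C) (X : Set C) (l : ℤ))
      = zpowSet (A : Set C) (X : Set C) ((l : ℤ) - (k : ℤ)) :=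
  zpowSet_mul_of_rightFull_general A hA X hX hAX hXXs hfull k l
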